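/- A net (a_ε)_ε of smooth functions on ℝ^(2n) is a smoothing symbol (i.e. there is N ∈ ℕ such that (a_ε)_ε ∈ 𝒮^m_{Λ,ρ,N} for every m ∈ ℝ) if and only if there exists N ∈ ℕ such that for all multi-indices α, β ∈ ℕ^(2n), sup_{ε∈(0,1]} ε^N ‖z^α ∂^β a_ε‖_{L^∞(ℝ^(2n))} < ∞. In particular the space of smoothing symbols is independent of the weight function Λ and of ρ ∈ (0,1]. -/

import Mathlib

open Set

/-- Japanese bracket `⟨z⟩ = (1+|z|²)^(1/2)`. -/
noncomputable def jap {V : Type*} [NormedAddCommGroup V] (z : V) : ℝ :=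
  Real.sqrt (1 + ‖z‖ ^ 2)

lemma jap_one_le {V : Type*} [NormedAddCommGroup V] (z : V) : 1 ≤ jap z := by
  rw [jap, Real.one_le_sqrt]; nlinarith [sq_nonneg ‖z‖]

lemma jap_pos {V : Type*} [NormedAddCommGroup V] (z : V) : 0 < jap z :=
  lt_of_lt_of_le one_pos (jap_one_le z)

lemma norm_le_jap {V : Type*} [NormedAddCommGroup V] (z : V) : ‖z‖ ≤ jap z :=
  Real.le_sqrt_of_sq_le (by nlinarith)

lemma jap_le {V : Type*} [NormedAddCommGroup V] (z : V) : jap z ≤ 1 + ‖z‖ := by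
  have h : Real.sqrt (1 + ‖z‖ ^ 2) ≤ Real.sqrt ((1 + ‖z‖) ^ 2) :=
    Real.sqrt_le_sqrt (by nlinarith [norm_nonneg z])
  simpa [jap, Real.sqrt_sq (by positivity : (0:ℝ) ≤ 1 + ‖z‖)] using h

lemma one_add_pow_le {x : ℝ} (hx : 0 ≤ x) (j : ℕ) :
    (1 + x) ^ j ≤ 2 ^ j * (1 + x ^ j) := by
  have h1 : (1 + x) ^ j ≤ (2 * max 1 x) ^ j := by
    apply pow_le_pow_left₀ (by positivity)
    rcases le_total 1 x with h | h
    · rw [max_eq_right h]; linarith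
    · rw [max_eq_left h]; linarith
  refine h1.trans ?_
  rw [mul_pow]
  apply mul_le_mul_of_nonneg_left _ (by positivity)
  rcases le_total 1 x with h | h
  · rw [max_eq_right h]; nlinarith [pow_nonneg hx j]
  · rw [max_eq_left h]
    rw [one_pow]
    nlinarith [pow_nonneg hx j]

/-- The symbol class `𝒮^m_{Λ,ρ,N}`. -/
def SymbolClass {n : ℕ} (Λ : (Fin (2 * n) → ℝ) → ℝ) (m ρ : ℝ) (N : ℕ)
    (a : ℝ → (Fin (2 * n) → ℝ) → ℂ) : Prop :=
  (∀ ε ∈ Set.Ioc (0 : ℝ) 1, ContDiff ℝ (⊤ : ℕ∞) (a ε)) ∧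
  ∀ k : ℕ, ∃ c : ℝ, ∀ ε ∈ Set.Ioc (0 : ℝ) 1, ∀ z,
    ‖iteratedFDeriv ℝ k (a ε) z‖ ≤ c * Λ z ^ (m - ρ * (k : ℝ)) * ε⁻¹ ^ N

/-- Characterization of smoothing symbols: `(a_ε)_ε ∈ ⋂_m 𝒮^m_{Λ,ρ,N}` for some `N` iff
there is `N` with `sup_ε ε^N ‖z^α ∂^β a_ε‖_{L^∞} < ∞` for all `α, β`; in particular the
class of smoothing symbols does not depend on `Λ` or `ρ`. -/
theorem stmt6 {n : ℕ} (Λ : (Fin (2 * n) → ℝ) → ℝ) (ρ : ℝ) (hρ : ρ ∈ Set.Ioc (0 : ℝ) 1)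
    (hcont : Continuous Λ) (hpos : ∀ z, 0 < Λ z)
    (μ c₁ c₂ : ℝ) (hμ : 0 < μ) (hc₁ : 0 < c₁) (hc₂ : 0 < c₂)
    (hlow : ∀ z, c₁ * jap z ^ μ ≤ Λ z) (hup : ∀ z, Λ z ≤ c₂ * jap z)
    (a : ℝ → (Fin (2 * n) → ℝ) → ℂ)
    (hsm : ∀ ε ∈ Set.Ioc (0 : ℝ) 1, ContDiff ℝ (⊤ : ℕ∞) (a ε)) :
    (∃ N : ℕ, ∀ m : ℝ, SymbolClass Λ m ρ N a) ↔
    (∃ N : ℕ, ∀ k K : ℕ, ∃ c : ℝ, ∀ ε ∈ Set.Ioc (0 : ℝ) 1, ∀ z,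
      ‖z‖ ^ k * ‖iteratedFDeriv ℝ K (a ε) z‖ ≤ c * ε⁻¹ ^ N) := by
  constructor
  · rintro ⟨N, hN⟩
    refine ⟨N, fun k K => ?_⟩
    set e : ℝ := -(k : ℝ) / μ with he
    obtain ⟨c, hc⟩ := (hN (ρ * K + e)).2 K
    refine ⟨|c| * c₁ ^ e, fun ε hε z => ?_⟩
    obtain ⟨hε0, hε1⟩ := hε
    have hεinv : (0:ℝ) < ε⁻¹ ^ N := by positivity
    have hΛe : (0:ℝ) < Λ z ^ e := Real.rpow_pos_of_pos (hpos z) _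
    have hjp := jap_pos z
    have hme : ρ * (K:ℝ) + e - ρ * K = e := by ring
    have hbound := hc ε ⟨hε0, hε1⟩ z
    rw [hme] at hbound
    have hbase : (0:ℝ) < c₁ * jap z ^ μ :=
      mul_pos hc₁ (Real.rpow_pos_of_pos hjp μ)
    have h1 : Λ z ^ e ≤ (c₁ * jap z ^ μ) ^ e :=
      Real.rpow_le_rpow_of_nonpos hbase (hlow z)
        (div_nonpos_of_nonpos_of_nonneg (by simp) hμ.le)
    have h2 : (c₁ * jap z ^ μ) ^ e = c₁ ^ e * jap z ^ (-(k:ℝ)) := by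
      rw [Real.mul_rpow hc₁.le (Real.rpow_pos_of_pos hjp μ).le,
        ← Real.rpow_mul hjp.le]
      congr 2
      rw [he]; field_simp
    have h3 : ‖z‖ ^ k ≤ jap z ^ (k:ℝ) := by
      rw [Real.rpow_natCast]
      exact pow_le_pow_left₀ (norm_nonneg z) (norm_le_jap z) k
    have hkey : ‖z‖ ^ k * Λ z ^ e ≤ c₁ ^ e := by
      calc ‖z‖ ^ k * Λ z ^ e ≤ jap z ^ (k:ℝ) * (c₁ ^ e * jap z ^ (-(k:ℝ))) := by
            rw [← h2]
            exact mul_le_mul h3 h1 hΛe.le (by positivity)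
        _ = c₁ ^ e * (jap z ^ (k:ℝ) * jap z ^ (-(k:ℝ))) := by ring
        _ = c₁ ^ e := by
            rw [← Real.rpow_add hjp, add_neg_cancel, Real.rpow_zero, mul_one]
    calc ‖z‖ ^ k * ‖iteratedFDeriv ℝ K (a ε) z‖
        ≤ ‖z‖ ^ k * (c * Λ z ^ e * ε⁻¹ ^ N) :=
          mul_le_mul_of_nonneg_left hbound (by positivity)
      _ ≤ ‖z‖ ^ k * (|c| * Λ z ^ e * ε⁻¹ ^ N) := by
          apply mul_le_mul_of_nonneg_left _ (by positivity)
          apply mul_le_mul_of_nonneg_right _ hεinv.le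
          exact mul_le_mul_of_nonneg_right (le_abs_self c) hΛe.le
      _ = ‖z‖ ^ k * Λ z ^ e * |c| * ε⁻¹ ^ N := by ring
      _ ≤ c₁ ^ e * |c| * ε⁻¹ ^ N := by
          apply mul_le_mul_of_nonneg_right _ hεinv.le
          exact mul_le_mul_of_nonneg_right hkey (abs_nonneg c)
      _ = |c| * c₁ ^ e * ε⁻¹ ^ N := by ring
  · rintro ⟨N, hN⟩
    refine ⟨N, fun m => ⟨hsm, fun k => ?_⟩⟩
    set s : ℝ := m - ρ * k with hs
    by_cases hs0 : 0 ≤ s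
    · obtain ⟨c, hc⟩ := hN 0 k
      refine ⟨max c 0 / c₁ ^ s, fun ε hε z => ?_⟩
      obtain ⟨hε0, hε1⟩ := hε
      have h1 := hc ε ⟨hε0, hε1⟩ z
      rw [pow_zero, one_mul] at h1
      have hc₁Λ : c₁ ^ s ≤ Λ z ^ s := by
        apply Real.rpow_le_rpow hc₁.le _ hs0
        calc c₁ = c₁ * 1 := (mul_one c₁).symm
          _ ≤ c₁ * jap z ^ μ :=
              mul_le_mul_of_nonneg_left (Real.one_le_rpow (jap_one_le z) hμ.le) hc₁.le
          _ ≤ Λ z := hlow z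
      have hεinv : (0:ℝ) ≤ ε⁻¹ ^ N := by positivity
      calc ‖iteratedFDeriv ℝ k (a ε) z‖ ≤ c * ε⁻¹ ^ N := h1
        _ ≤ max c 0 * ε⁻¹ ^ N := mul_le_mul_of_nonneg_right (le_max_left c 0) hεinv
        _ = max c 0 / c₁ ^ s * c₁ ^ s * ε⁻¹ ^ N := by
            rw [div_mul_cancel₀]
            exact ne_of_gt (Real.rpow_pos_of_pos hc₁ s)
        _ ≤ max c 0 / c₁ ^ s * Λ z ^ s * ε⁻¹ ^ N := by
            apply mul_le_mul_of_nonneg_right _ hεinv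
            apply mul_le_mul_of_nonneg_left hc₁Λ
            positivity
    · push_neg at hs0
      set j : ℕ := ⌈-s⌉₊ with hj
      have hjs : -s ≤ (j : ℝ) := Nat.le_ceil _
      obtain ⟨c0, hc0⟩ := hN 0 k
      obtain ⟨cj, hcj⟩ := hN j k
      refine ⟨c₂ ^ (-s) * 2 ^ j * (max c0 0 + max cj 0), fun ε hε z => ?_⟩
      obtain ⟨hε0, hε1⟩ := hε
      have hεinv : (0:ℝ) ≤ ε⁻¹ ^ N := by positivity
      have hjp := jap_pos z
      set D : ℝ := ‖iteratedFDeriv ℝ k (a ε) z‖ with hD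
      have hD0 : D ≤ max c0 0 * ε⁻¹ ^ N := by
        have h := hc0 ε ⟨hε0, hε1⟩ z
        rw [pow_zero, one_mul] at h
        exact h.trans (mul_le_mul_of_nonneg_right (le_max_left c0 0) hεinv)
      have hDj : ‖z‖ ^ j * D ≤ max cj 0 * ε⁻¹ ^ N :=
        (hcj ε ⟨hε0, hε1⟩ z).trans
          (mul_le_mul_of_nonneg_right (le_max_left cj 0) hεinv)
      have hDnn : 0 ≤ D := norm_nonneg _
      have hjap : jap z ^ (-s) ≤ 2 ^ j * (1 + ‖z‖ ^ j) := by
        calc jap z ^ (-s) ≤ jap z ^ (j:ℝ) :=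
              Real.rpow_le_rpow_of_exponent_le (jap_one_le z) hjs
          _ = jap z ^ j := Real.rpow_natCast _ _
          _ ≤ (1 + ‖z‖) ^ j := pow_le_pow_left₀ hjp.le (jap_le z) j
          _ ≤ 2 ^ j * (1 + ‖z‖ ^ j) := one_add_pow_le (norm_nonneg z) j
      have hΛs : Λ z ^ (-s) ≤ c₂ ^ (-s) * (2 ^ j * (1 + ‖z‖ ^ j)) := by
        calc Λ z ^ (-s) ≤ (c₂ * jap z) ^ (-s) :=
              Real.rpow_le_rpow (hpos z).le (hup z) (by linarith)
          _ = c₂ ^ (-s) * jap z ^ (-s) := Real.mul_rpow hc₂.le hjp.le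
          _ ≤ c₂ ^ (-s) * (2 ^ j * (1 + ‖z‖ ^ j)) :=
              mul_le_mul_of_nonneg_left hjap (by positivity)
      have key : Λ z ^ (-s) * D ≤ c₂ ^ (-s) * 2 ^ j * (max c0 0 + max cj 0) * ε⁻¹ ^ N := by
        have h1 : Λ z ^ (-s) * D ≤ c₂ ^ (-s) * (2 ^ j * (1 + ‖z‖ ^ j)) * D :=
          mul_le_mul_of_nonneg_right hΛs hDnn
        have h2 : c₂ ^ (-s) * (2 ^ j * (1 + ‖z‖ ^ j)) * D
            = c₂ ^ (-s) * 2 ^ j * (D + ‖z‖ ^ j * D) := by ring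
        rw [h2] at h1
        refine h1.trans ?_
        have h3 : D + ‖z‖ ^ j * D ≤ (max c0 0 + max cj 0) * ε⁻¹ ^ N := by
          rw [add_mul]; exact add_le_add hD0 hDj
        calc c₂ ^ (-s) * 2 ^ j * (D + ‖z‖ ^ j * D)
            ≤ c₂ ^ (-s) * 2 ^ j * ((max c0 0 + max cj 0) * ε⁻¹ ^ N) :=
              mul_le_mul_of_nonneg_left h3 (by positivity)
          _ = c₂ ^ (-s) * 2 ^ j * (max c0 0 + max cj 0) * ε⁻¹ ^ N := by ring
      have hid : D = Λ z ^ s * (Λ z ^ (-s) * D) := by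
        rw [← mul_assoc, ← Real.rpow_add (hpos z), add_neg_cancel, Real.rpow_zero, one_mul]
      calc D = Λ z ^ s * (Λ z ^ (-s) * D) := hid
        _ ≤ Λ z ^ s * (c₂ ^ (-s) * 2 ^ j * (max c0 0 + max cj 0) * ε⁻¹ ^ N) :=
            mul_le_mul_of_nonneg_left key (Real.rpow_pos_of_pos (hpos z) s).le
        _ = c₂ ^ (-s) * 2 ^ j * (max c0 0 + max cj 0) * Λ z ^ s * ε⁻¹ ^ N := by ring
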